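/- arXiv:2604.23787 — 6 statements merged into one kernel-verified Lean document; each statement's English description precedes it below -/
import Mathlib

section
/- For even positive integers n and k with 4 ≤ k ≤ n, the ratio of binomial coefficients satisfies C(n/2, k/2) / C(n, k) ≤ (k/n)^(k/2). -/
/-!
Write `n = 2m`, `k = 2j` and fix `j`. At `m = j` both sides equal `1`. Passing from `m` to
`m + 1` multiplies `C(m, j) / C(2m, 2j)` by `1 - 2j/(2m+1)` and multiplies `(j/m)^j` by
`(m/(m+1))^j`. By Bernoulli's inequality the second factor is at least `1 - j/(m+1)`, which is
at least the first one, so induction on `m` proves the bound. For `m < j` the left side is `0`.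
-/

lemma one_sub_two_mul_div_le_div_succ_pow (m j : ℕ) :
    1 - 2 * (j : ℝ) / (2 * m + 1) ≤ ((m : ℝ) / (m + 1)) ^ j := by
  have hm : (0 : ℝ) < m + 1 := by positivity
  have hj : (j : ℝ) / (m + 1) ≤ 2 * j / (2 * m + 1) := by
    rw [div_le_div_iff₀ hm (by positivity)]
    nlinarith [(j.cast_nonneg : (0 : ℝ) ≤ j)]
  have hsub : (j : ℝ) * ((m : ℝ) / (m + 1) - 1) = -(j / (m + 1)) := by
    field_simp
    ring
  calc 1 - 2 * (j : ℝ) / (2 * m + 1) ≤ 1 + j * ((m : ℝ) / (m + 1) - 1) := by linarith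
    _ ≤ ((m : ℝ) / (m + 1)) ^ j :=
        one_add_mul_sub_le_pow (by linarith [div_nonneg m.cast_nonneg hm.le]) j

lemma choose_div_choose_two_mul_succ {m j : ℕ} (hjm : j ≤ m) :
    ((m + 1).choose j : ℝ) / (2 * (m + 1)).choose (2 * j) =
      (m.choose j : ℝ) / (2 * m).choose (2 * j) * (1 - 2 * (j : ℝ) / (2 * m + 1)) := by
  have h₀ := Nat.choose_mul_succ_eq m j
  have h₁ := Nat.choose_mul_succ_eq (2 * m) (2 * j)
  have h₂ := Nat.choose_mul_succ_eq (2 * m + 1) (2 * j)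
  rw [show 2 * (m + 1) = 2 * m + 1 + 1 by ring]
  have hb : (0 : ℝ) < (2 * m).choose (2 * j) := by exact_mod_cast Nat.choose_pos (by omega)
  have hb' : (0 : ℝ) < (2 * m + 1 + 1).choose (2 * j) := by exact_mod_cast Nat.choose_pos (by omega)
  rify [show j ≤ m + 1 by omega, show 2 * j ≤ 2 * m + 1 by omega,
    show 2 * j ≤ 2 * m + 1 + 1 by omega] at h₀ h₁ h₂
  have hmj : (m : ℝ) + 1 - j ≠ 0 := by
    have : (j : ℝ) ≤ m := by exact_mod_cast hjm
    linarith
  set a := (m.choose j : ℝ)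
  set a' := ((m + 1).choose j : ℝ)
  set b := ((2 * m).choose (2 * j) : ℝ)
  set c := ((2 * m + 1).choose (2 * j) : ℝ)
  set b' := ((2 * m + 1 + 1).choose (2 * j) : ℝ)
  have key : a' * b * (2 * m + 1) = a * (2 * m + 1 - 2 * j) * b' := by
    -- after multiplying by `2(m+1-j)` the identity is linear in `h₀`, `h₁`, `h₂`
    refine mul_left_cancel₀ (mul_ne_zero two_ne_zero hmj) ?_
    linear_combination -2 * b * (2 * m + 1) * h₀ + a * (2 * m + 1 - 2 * j) * h₂
      + 2 * a * (m + 1) * h₁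
  field_simp
  linear_combination key

theorem choose_div_choose_two_mul_le (m j : ℕ) :
    (m.choose j : ℝ) / (2 * m).choose (2 * j) ≤ ((j : ℝ) / m) ^ j := by
  rcases Nat.eq_zero_or_pos j with rfl | hj
  · simp
  rcases lt_or_ge m j with hmj | hjm
  · simp only [Nat.choose_eq_zero_of_lt hmj, Nat.cast_zero, zero_div]
    positivity
  induction m, hjm using Nat.le_induction with
  | base =>
    have : (j : ℝ) ≠ 0 := by positivity
    simp [this]
  | succ m hjm ih =>
    have hm : (m : ℝ) ≠ 0 := by
      have : 0 < m := by omega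
      positivity
    have hfactor : 0 ≤ 1 - 2 * (j : ℝ) / (2 * m + 1) := by
      rw [sub_nonneg, div_le_one (by positivity)]
      have : (j : ℝ) ≤ m := by exact_mod_cast hjm
      linarith
    calc ((m + 1).choose j : ℝ) / (2 * (m + 1)).choose (2 * j)
        = (m.choose j : ℝ) / (2 * m).choose (2 * j) * (1 - 2 * (j : ℝ) / (2 * m + 1)) :=
          choose_div_choose_two_mul_succ hjm
      _ ≤ ((j : ℝ) / m) ^ j * ((m : ℝ) / (m + 1)) ^ j :=
          mul_le_mul ih (one_sub_two_mul_div_le_div_succ_pow m j) hfactor (by positivity)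
      _ = ((j : ℝ) / ↑(m + 1)) ^ j := by
          rw [← mul_pow, div_mul_div_cancel₀ hm, Nat.cast_succ]

theorem stmt_0_general (n k : ℕ) (hn : Even n) (hk : Even k) :
    ((n / 2).choose (k / 2) : ℝ) / (n.choose k : ℝ) ≤ ((k : ℝ) / n) ^ (k / 2) := by
  obtain ⟨m, rfl⟩ := hn
  obtain ⟨j, rfl⟩ := hk
  simpa [← two_mul, mul_div_mul_left _ _ (two_ne_zero' ℝ)] using choose_div_choose_two_mul_le m j

theorem stmt_0 (n k : ℕ) (hn : Even n) (hk : Even k) (hk4 : 4 ≤ k) (hkn : k ≤ n) :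
    ((n / 2).choose (k / 2) : ℝ) / (n.choose k : ℝ) ≤ ((k : ℝ) / n) ^ (k / 2) :=
  stmt_0_general n k hn hk
end

section
/- The limit as n → ∞ of n·k(n)²·C(n/2, k(n)/2) / C(n, k(n)) equals 0, uniformly over all choices of the function k(n) with 4 ≤ k(n) ≤ n/2 + 1 and n, k(n) even. Precisely: for every ε > 0 there exists N such that for all even n ≥ N and all even k with 4 ≤ k ≤ n/2 + 1, we have n·k²·C(n/2, k/2)/C(n, k) < ε. -/
/-!
Write `n = 2m`, `k = 2j`. Vandermonde gives `C(m, j)² ≤ C(2m, 2j)`, so the quantity is at most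
`8 m j² / C(m, j)`, and it suffices to show `m j² = o(C(m, j))` uniformly in `2 ≤ j ≤ 2m/3`.
Everything follows from `(m/j)^j ≤ C(m, j)`: when `4j ≤ m` this gives `m² j² ≤ 32 C(m, j)`,
and when `m < 4j` it gives `(3/2)^j ≤ C(m, j)`, which beats `m j² < 4 j³` as `j > m/4 → ∞`.
-/

open Finset Filter

namespace Nat

theorem pow_mul_factorial_le_descFactorial_mul_pow {m j : ℕ} (h : j ≤ m) :
    m ^ j * j ! ≤ m.descFactorial j * j ^ j := by
  have hfactor : ∀ i ∈ range j, m * (j - i) ≤ (m - i) * j := by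
    intro i _
    rw [Nat.mul_sub, Nat.sub_mul, mul_comm i j]
    exact Nat.sub_le_sub_left (Nat.mul_le_mul_right i h) _
  calc m ^ j * j ! = ∏ i ∈ range j, m * (j - i) := by
        rw [prod_mul_distrib, prod_const, card_range, ← descFactorial_eq_prod_range,
          descFactorial_self]
    _ ≤ ∏ i ∈ range j, (m - i) * j := prod_le_prod' hfactor
    _ = m.descFactorial j * j ^ j := by
        rw [prod_mul_distrib, prod_const, card_range, ← descFactorial_eq_prod_range]

theorem pow_le_choose_mul_pow {m j : ℕ} (h : j ≤ m) : m ^ j ≤ m.choose j * j ^ j := by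
  have key := pow_mul_factorial_le_descFactorial_mul_pow h
  rw [descFactorial_eq_factorial_mul_choose, mul_assoc, mul_comm (j !)] at key
  exact Nat.le_of_mul_le_mul_right key (factorial_pos j)

theorem choose_mul_choose_le_add_choose (m m' j j' : ℕ) :
    m.choose j * m'.choose j' ≤ (m + m').choose (j + j') := by
  rw [add_choose_eq]
  exact single_le_sum (f := fun p : ℕ × ℕ => m.choose p.1 * m'.choose p.2)
    (fun _ _ => Nat.zero_le _) (mem_antidiagonal.mpr rfl : (j, j') ∈ antidiagonal (j + j'))

theorem pow_four_le_two_mul_four_pow (j : ℕ) : j ^ 4 ≤ 2 * 4 ^ j := by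
  induction j with
  | zero => norm_num
  | succ j ih =>
    rcases Nat.lt_or_ge j 3 with hj | hj
    · interval_cases j <;> norm_num
    · have h81 : (3 * (j + 1)) ^ 4 ≤ (4 * j) ^ 4 := Nat.pow_le_pow_left (by omega) 4
      rw [mul_pow, mul_pow] at h81
      have h4 : 4 ^ (j + 1) = 4 * 4 ^ j := by ring
      omega

theorem sq_mul_sq_le_choose {m j : ℕ} (hj : 2 ≤ j) (hjm : 4 * j ≤ m) :
    m ^ 2 * j ^ 2 ≤ 32 * m.choose j := by
  obtain ⟨i, rfl⟩ := Nat.exists_eq_add_of_le' hj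
  have hchoose : m ^ 2 * 4 ^ i ≤ m.choose (i + 2) * (i + 2) ^ 2 := by
    refine Nat.le_of_mul_le_mul_right ?_ (pow_pos (by omega : 0 < i + 2) i)
    calc m ^ 2 * 4 ^ i * (i + 2) ^ i = m ^ 2 * (4 * (i + 2)) ^ i := by rw [mul_pow]; ring
      _ ≤ m ^ 2 * m ^ i := by gcongr
      _ = m ^ (i + 2) := by ring
      _ ≤ m.choose (i + 2) * (i + 2) ^ (i + 2) := pow_le_choose_mul_pow (by omega)
      _ = m.choose (i + 2) * (i + 2) ^ 2 * (i + 2) ^ i := by ring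
  refine Nat.le_of_mul_le_mul_right ?_ (pow_pos (by omega : 0 < i + 2) 2)
  calc m ^ 2 * (i + 2) ^ 2 * (i + 2) ^ 2 = m ^ 2 * (i + 2) ^ 4 := by ring
    _ ≤ m ^ 2 * (2 * 4 ^ (i + 2)) := by gcongr; exact pow_four_le_two_mul_four_pow _
    _ = 32 * (m ^ 2 * 4 ^ i) := by ring
    _ ≤ 32 * (m.choose (i + 2) * (i + 2) ^ 2) := by gcongr
    _ = 32 * m.choose (i + 2) * (i + 2) ^ 2 := by ring

theorem three_pow_le_two_pow_mul_choose {m j : ℕ} (h : 3 * j ≤ 2 * m) :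
    3 ^ j ≤ 2 ^ j * m.choose j := by
  rcases Nat.eq_zero_or_pos j with rfl | hj
  · simp
  refine Nat.le_of_mul_le_mul_right ?_ (pow_pos hj j)
  calc 3 ^ j * j ^ j = (3 * j) ^ j := by ring
    _ ≤ (2 * m) ^ j := Nat.pow_le_pow_left h j
    _ = 2 ^ j * m ^ j := by ring
    _ ≤ 2 ^ j * (m.choose j * j ^ j) := by gcongr; exact pow_le_choose_mul_pow (by omega)
    _ = 2 ^ j * m.choose j * j ^ j := by ring

end Nat

theorem eventually_mul_sq_lt_mul_choose {ε : ℝ} (hε : 0 < ε) :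
    ∀ᶠ m : ℕ in atTop, ∀ j, 2 ≤ j → 3 * j ≤ 2 * m → (m : ℝ) * j ^ 2 < ε * m.choose j := by
  obtain ⟨J, hJ⟩ := ((tendsto_pow_const_div_const_pow_of_one_lt 3 (r := 3 / 2) (by norm_num)).eventually
    (gt_mem_nhds (by positivity : 0 < ε / 4))).exists_forall_of_atTop
  filter_upwards [eventually_ge_atTop (4 * J), eventually_gt_atTop ⌈32 / ε⌉₊]
    with m hmJ hmε j hj hjm
  have hC : (0 : ℝ) < m.choose j := by exact_mod_cast Nat.choose_pos (by omega)
  rcases le_or_gt (4 * j) m with hsmall | hlarge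
  · have hsq : (m : ℝ) ^ 2 * j ^ 2 ≤ 32 * m.choose j := by
      exact_mod_cast Nat.sq_mul_sq_le_choose hj hsmall
    have hm : 32 < ε * m := by
      rw [← div_lt_iff₀' hε]
      exact Nat.lt_of_ceil_lt hmε
    refine lt_of_mul_lt_mul_left ?_ (Nat.cast_nonneg m)
    calc (m : ℝ) * (m * j ^ 2) = (m : ℝ) ^ 2 * (j : ℝ) ^ 2 := by ring
      _ ≤ 32 * (m.choose j : ℝ) := hsq
      _ < ε * m * m.choose j := by gcongr
      _ = m * (ε * m.choose j) := by ring
  · have hexp : (3 / 2 : ℝ) ^ j ≤ m.choose j := by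
      have h := Nat.three_pow_le_two_pow_mul_choose hjm
      rw [div_pow, div_le_iff₀ (by positivity), mul_comm]
      exact_mod_cast h
    have hcube : (j : ℝ) ^ 3 < ε / 4 * (3 / 2) ^ j := by
      rw [← div_lt_iff₀ (by positivity)]
      exact hJ j (by omega)
    have hm : (m : ℝ) < 4 * j := by exact_mod_cast hlarge
    have hj0 : (0 : ℝ) < j := by exact_mod_cast (by omega : 0 < j)
    calc (m : ℝ) * j ^ 2 < 4 * (j : ℝ) * (j : ℝ) ^ 2 := by gcongr
      _ = 4 * (j : ℝ) ^ 3 := by ring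
      _ < 4 * (ε / 4 * (3 / 2) ^ j) := by gcongr
      _ = ε * (3 / 2) ^ j := by ring
      _ ≤ ε * m.choose j := by gcongr

theorem stmt_1 :
    ∀ ε : ℝ, 0 < ε → ∃ N : ℕ, ∀ n k : ℕ, Even n → Even k → N ≤ n →
      4 ≤ k → k ≤ n / 2 + 1 →
      (n : ℝ) * (k : ℝ) ^ 2 * ((n / 2).choose (k / 2) : ℝ) / (n.choose k : ℝ) < ε := by
  intro ε hε
  obtain ⟨M, hM⟩ := (eventually_mul_sq_lt_mul_choose (by positivity : 0 < ε / 8)).exists_forall_of_atTop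
  refine ⟨2 * M, fun n k hn hk hMn hk4 hkn => ?_⟩
  obtain ⟨m, rfl⟩ := hn
  obtain ⟨j, rfl⟩ := hk
  rw [show (m + m) / 2 = m by omega, show (j + j) / 2 = j by omega]
  have hsmall := hM m (by omega) j (by omega) (by omega)
  have hvand : (m.choose j : ℝ) * m.choose j ≤ (m + m).choose (j + j) := by
    exact_mod_cast Nat.choose_mul_choose_le_add_choose m m j j
  have hC : (0 : ℝ) < m.choose j := by exact_mod_cast Nat.choose_pos (by omega)
  rw [div_lt_iff₀ (by exact_mod_cast Nat.choose_pos (by omega))]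
  push_cast
  calc ((m : ℝ) + m) * (j + j) ^ 2 * m.choose j = 8 * (m * j ^ 2) * m.choose j := by ring
    _ < 8 * (ε / 8 * m.choose j) * m.choose j := by gcongr
    _ = ε * (m.choose j * m.choose j) := by ring
    _ ≤ ε * (m + m).choose (j + j) := by gcongr
end

section
/- Let G be a finite abelian group of order n and, for a function k = k(n) with 4 ≤ k ≤ ⌊n/2⌋ + 1, let N(k, b) be the number of k-element subsets of G whose elements sum to b. Then lim_{n→∞} (min_{b∈G} N(k, b)) / (max_{b∈G} N(k, b)) = 1. Precisely: for every ε > 0 there exists N₀ such that for every finite abelian group G of order n ≥ N₀ and every integer k with 4 ≤ k ≤ ⌊n/2⌋ + 1, min_b N(k,b) / max_b N(k,b) > 1 − ε. -/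
/-!
By Fourier inversion on `G`, `n N(k, b) = ∑_ψ ψ(-b) e_k(ψ)`, where `e_k(ψ)` is the `k`-th
elementary symmetric function of the values `ψ(g)`, `g ∈ G`. The trivial character contributes
`C(n, k)`. A nontrivial character takes each `d`-th root of unity exactly `n / d` times (`d ≥ 2`
the size of its image), so `∏_g (X - ψ g) = (X^d - 1)^(n/d)` and `|e_k(ψ)| ≤ C(n/d, (n-k)/d)`.
Since `C(n/d, (n-k)/d) C(n - n/d, 2)` is a single term of Vandermonde's identity for
`C(n, n - k)`, this is at most `C(n, k) / (T n)` once `n ≥ 8T + 10`. Hence every `n N(k, b)` lies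
within `C(n, k) / T` of `C(n, k)`, and `min_b N(k, b) / max_b N(k, b) ≥ (T - 1) / (T + 1)`.
-/

open Finset Polynomial

namespace Nat

theorem choose_mul_choose_le_choose_add (a b c e : ℕ) :
    a.choose c * b.choose e ≤ (a + b).choose (c + e) := by
  rw [Nat.add_choose_eq]
  exact single_le_sum (f := fun ij : ℕ × ℕ => a.choose ij.1 * b.choose ij.2)
    (fun _ _ => Nat.zero_le _) (a := (c, e)) (mem_antidiagonal.mpr rfl)

theorem choose_two_le_choose {m j : ℕ} (hj : 2 ≤ j) (hjm : j + 2 ≤ m) :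
    m.choose 2 ≤ m.choose j := by
  have mono : ∀ r, 2 ≤ r → r ≤ m / 2 → m.choose 2 ≤ m.choose r := by
    intro r h2r
    induction r, h2r using Nat.le_induction with
    | base => exact fun _ => le_rfl
    | succ r _ ih =>
      intro hr
      exact (ih (by omega)).trans (choose_le_succ_of_lt_half_left (by omega))
  rcases le_or_gt j (m / 2) with h | h
  · exact mono j hj h
  · rw [← choose_symm (by omega : j ≤ m)]
    exact mono (m - j) (by omega) (by omega)

theorem mul_choose_div_le_choose {T n k d : ℕ} (hn : 8 * T + 10 ≤ n) (hk4 : 4 ≤ k)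
    (hk : k ≤ n / 2 + 1) (hd : 2 ≤ d) (hdn : d ∣ n) (hdk : d ∣ n - k) :
    T * n * (n / d).choose ((n - k) / d) ≤ n.choose k := by
  obtain ⟨u, rfl⟩ := hdn
  obtain ⟨v, hv⟩ := hdk
  have hd0 : 0 < d := by omega
  rw [hv, Nat.mul_div_cancel_left u hd0, Nat.mul_div_cancel_left v hd0]
  have hu : 2 * u ≤ d * u := Nat.mul_le_mul_right u hd
  have hv2 : 2 * v ≤ d * v := Nat.mul_le_mul_right v hd
  have hvu : v ≤ u := by
    by_contra! h
    have := Nat.mul_lt_mul_of_pos_left h hd0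
    omega
  have hk' : 2 * (u - v) ≤ d * (u - v) := Nat.mul_le_mul_right _ hd
  have hsub : d * (u - v) = d * u - d * v := Nat.mul_sub d u v
  generalize d * u = N at *
  generalize d * v = V at *
  generalize d * (u - v) = K at *
  set m := N - u
  have hTn : T * N ≤ m.choose 2 := by
    rw [Nat.choose_two_right, Nat.le_div_iff_mul_le two_pos]
    have : 4 * T + 1 ≤ m := by omega
    calc T * N * 2 ≤ T * (2 * m) * 2 := by gcongr; omega
      _ = 4 * T * m := by ring
      _ ≤ m * (m - 1) := by rw [mul_comm m]; exact Nat.mul_le_mul_right m (by omega)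
  calc T * N * u.choose v ≤ u.choose v * m.choose 2 := by rw [mul_comm]; gcongr
    _ ≤ u.choose v * m.choose (V - v) :=
        Nat.mul_le_mul_left _ (choose_two_le_choose (by omega) (by omega))
    _ ≤ (u + m).choose (v + (V - v)) := choose_mul_choose_le_choose_add _ _ _ _
    _ = N.choose k := by
        rw [← choose_symm (by omega : k ≤ N)]
        congr 1 <;> omega

end Nat

namespace Polynomial

theorem coeff_X_pow_sub_one_pow {R : Type*} [CommRing R] {d : ℕ} (hd : 0 < d) (m r : ℕ) :
    ((X ^ d - 1) ^ m : R[X]).coeff r =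
      if d ∣ r then (-1) ^ (m - r / d) * (m.choose (r / d) : R) else 0 := by
  have : (X ^ d - 1 : R[X]) ^ m = expand R d ((X + C (-1)) ^ m) := by
    simp [sub_eq_add_neg]
  rw [this, coeff_expand hd, coeff_X_add_C_pow]

end Polynomial

namespace AddChar

theorem map_sum_eq_prod {ι A M : Type*} [AddCommMonoid A] [CommMonoid M] (ψ : AddChar A M)
    (s : Finset ι) (f : ι → A) : ψ (∑ i ∈ s, f i) = ∏ i ∈ s, ψ (f i) := by
  classical
  induction s using Finset.induction_on with
  | empty => simp
  | insert a s ha ih => rw [sum_insert ha, prod_insert ha, map_add_eq_mul, ih]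

variable {G M : Type*} [AddCommGroup G] [Fintype G] [CommMonoid M] [DecidableEq M]

theorem card_fiber_eq_card_ker (ψ : AddChar G M) (a : G) :
    #{g | ψ g = ψ a} = #{g | ψ g = 1} :=
  AddMonoidHom.card_fiber_eq_of_mem_range ψ.toAddMonoidHom ⟨a, rfl⟩ ⟨0, ψ.map_zero_eq_one⟩

theorem card_image_mul_card_ker (ψ : AddChar G M) :
    #(univ.image ψ) * #{g | ψ g = 1} = Fintype.card G := by
  rw [← sum_const_nat (fun z hz => ?_), ← card_univ, card_eq_sum_card_image ψ]
  obtain ⟨a, -, rfl⟩ := mem_image.mp hz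
  exact card_fiber_eq_card_ker ψ a

theorem pow_card_image_eq_one (ψ : AddChar G M) (a : G) : ψ a ^ #(univ.image ψ) = 1 := by
  set I := univ.image ψ
  have htrans : I.image (ψ a * ·) = I := by
    ext z
    simp only [I, image_image, mem_image, mem_univ, true_and, Function.comp_apply,
      ← map_add_eq_mul]
    exact ⟨fun ⟨x, hx⟩ => ⟨a + x, hx⟩, fun ⟨x, hx⟩ => ⟨-a + x, by rwa [add_neg_cancel_left]⟩⟩
  have hprod : ∏ w ∈ I, w = ψ a ^ #I * ∏ w ∈ I, w := by
    conv_lhs => rw [← htrans]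
    rw [prod_image fun x _ y _ h => (ψ.val_isUnit a).mul_left_cancel h, prod_mul_distrib,
      prod_const]
  have hunit : IsUnit (∏ w ∈ I, w) := IsUnit.prod_iff.mpr fun w hw => by
    obtain ⟨b, -, rfl⟩ := mem_image.mp hw
    exact ψ.val_isUnit b
  exact hunit.mul_eq_right.mp hprod.symm

theorem card_image_pos (ψ : AddChar G M) : 0 < #(univ.image ψ) :=
  card_pos.mpr (univ_nonempty.image ψ)

theorem one_lt_card_image {ψ : AddChar G M} (hψ : ψ ≠ 0) : 1 < #(univ.image ψ) := by
  obtain ⟨a, ha⟩ := ne_zero_iff.mp hψ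
  exact one_lt_card.mpr ⟨1, mem_image.mpr ⟨0, mem_univ _, ψ.map_zero_eq_one⟩, ψ a,
    mem_image_of_mem ψ (mem_univ a), fun h => ha h.symm⟩

section Complex

variable (ψ : AddChar G ℂ)

theorem image_eq_nthRootsFinset : univ.image ψ = nthRootsFinset #(univ.image ψ) (1 : ℂ) := by
  have hd := ψ.card_image_pos
  refine eq_of_subset_of_card_le (fun z hz => ?_) ?_
  · obtain ⟨a, -, rfl⟩ := mem_image.mp hz
    exact (mem_nthRootsFinset hd 1).mpr (ψ.pow_card_image_eq_one a)
  · rw [(Complex.isPrimitiveRoot_exp _ hd.ne').card_nthRootsFinset]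

theorem prod_X_sub_C_eq :
    ∏ g, (X - C (ψ g)) = (X ^ #(univ.image ψ) - 1) ^ #{g | ψ g = 1} := by
  have hd := ψ.card_image_pos
  rw [prod_comp (fun z => X - C z) ψ,
    X_pow_sub_one_eq_prod hd (Complex.isPrimitiveRoot_exp _ hd.ne'), ← image_eq_nthRootsFinset,
    ← prod_pow]
  refine prod_congr rfl fun z hz => ?_
  obtain ⟨a, -, rfl⟩ := mem_image.mp hz
  rw [card_fiber_eq_card_ker]

theorem norm_esymm_eq {k : ℕ} (hk : k ≤ Fintype.card G) :
    ‖(univ.val.map ψ).esymm k‖ =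
      if #(univ.image ψ) ∣ Fintype.card G - k then
        ((Fintype.card G / #(univ.image ψ)).choose
          ((Fintype.card G - k) / #(univ.image ψ)) : ℝ)
      else 0 := by
  set n := Fintype.card G
  have hcard : Multiset.card (univ.val.map ψ) = n := by simp [n]
  have hvieta := Multiset.prod_X_sub_C_coeff (univ.val.map ψ) (k := n - k) (by omega)
  rw [Multiset.map_map, hcard, Nat.sub_sub_self hk, ← prod_eq_multiset_prod, Function.comp_def,
    prod_X_sub_C_eq, coeff_X_pow_sub_one_pow ψ.card_image_pos] at hvieta
  have hm : n / #(univ.image ψ) = #{g | ψ g = 1} :=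
    Nat.div_eq_of_eq_mul_right ψ.card_image_pos ψ.card_image_mul_card_ker.symm
  have hnorm := congrArg norm hvieta
  rw [norm_mul, norm_pow, norm_neg, norm_one, one_pow, one_mul] at hnorm
  rw [← hnorm, hm]
  split_ifs <;> simp

theorem mul_norm_esymm_le_choose (hψ : ψ ≠ 0) {T k : ℕ} (hn : 8 * T + 10 ≤ Fintype.card G)
    (hk4 : 4 ≤ k) (hk : k ≤ Fintype.card G / 2 + 1) :
    (T * Fintype.card G : ℝ) * ‖(univ.val.map ψ).esymm k‖ ≤ (Fintype.card G).choose k := by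
  rw [ψ.norm_esymm_eq (by omega)]
  split_ifs with h
  · exact_mod_cast Nat.mul_choose_div_le_choose hn hk4 hk (one_lt_card_image hψ)
      (Dvd.intro _ ψ.card_image_mul_card_ker) h
  · simp

end Complex

omit [DecidableEq M] in
theorem esymm_map_zero (k : ℕ) :
    (univ.val.map (0 : AddChar G ℂ)).esymm k = (Fintype.card G).choose k := by
  rw [esymm_map_val]
  simp

end AddChar

section SubsetSums

variable {G : Type*} [AddCommGroup G] [Fintype G] [DecidableEq G]

variable (G) in
def subsetSumCount (k : ℕ) (b : G) : ℕ := #{S ∈ univ.powersetCard k | S.sum id = b}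

theorem subsetSumCount_mul_card (k : ℕ) (b : G) :
    (subsetSumCount G k b : ℂ) * Fintype.card G =
      ∑ ψ : AddChar G ℂ, ψ (-b) * (univ.val.map ψ).esymm k := by
  have hψ (ψ : AddChar G ℂ) : ψ (-b) * (univ.val.map ψ).esymm k =
      ∑ S ∈ univ.powersetCard k, ψ (S.sum id - b) := by
    rw [esymm_map_val, mul_sum]
    refine sum_congr rfl fun S _ => ?_
    rw [sub_eq_add_neg, AddChar.map_add_eq_mul, mul_comm, AddChar.map_sum_eq_prod]
    rfl
  simp_rw [hψ]
  rw [sum_comm]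
  simp_rw [AddChar.sum_apply_eq_ite, sub_eq_zero]
  rw [sum_ite, sum_const_zero, add_zero, sum_const, nsmul_eq_mul, subsetSumCount]

theorem abs_subsetSumCount_mul_card_sub_choose_le {k : ℕ} {B : ℝ}
    (hB : ∀ ψ : AddChar G ℂ, ψ ≠ 0 → ‖(univ.val.map ψ).esymm k‖ ≤ B) (b : G) :
    |(subsetSumCount G k b : ℝ) * Fintype.card G - (Fintype.card G).choose k| ≤
      (Fintype.card G - 1 : ℕ) * B := by
  have hsplit :
      (((subsetSumCount G k b : ℝ) * Fintype.card G - (Fintype.card G).choose k : ℝ) : ℂ) =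
      ∑ ψ ∈ univ.erase (0 : AddChar G ℂ), ψ (-b) * (univ.val.map ψ).esymm k := by
    push_cast
    rw [subsetSumCount_mul_card, ← add_sum_erase _ _ (mem_univ 0), AddChar.zero_apply, one_mul,
      AddChar.esymm_map_zero, add_sub_cancel_left]
  rw [← Real.norm_eq_abs, ← Complex.norm_real, hsplit]
  calc _ ≤ ∑ ψ ∈ univ.erase (0 : AddChar G ℂ), ‖ψ (-b) * (univ.val.map ψ).esymm k‖ :=
        norm_sum_le _ _
    _ ≤ #(univ.erase (0 : AddChar G ℂ)) • B := by
        refine sum_le_card_nsmul _ _ _ fun ψ hψ => ?_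
        rw [norm_mul, AddChar.norm_apply, one_mul]
        exact hB ψ (ne_of_mem_erase hψ)
    _ = _ := by rw [card_erase_of_mem (mem_univ _), card_univ, AddChar.card_eq, nsmul_eq_mul]

end SubsetSums

theorem div_le_div_of_abs_sub_le {a b c t : ℝ} (hc : 0 < c) (ht : 1 < t)
    (ha : |a - c| ≤ c / t) (hb : |b - c| ≤ c / t) : (t - 1) / (t + 1) ≤ a / b := by
  obtain ⟨s, rfl⟩ : ∃ s, c = s * t := ⟨c / t, by field_simp⟩
  rw [mul_div_cancel_right₀ _ (by positivity)] at ha hb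
  have hs : 0 < s := pos_of_mul_pos_left hc (by positivity)
  obtain ⟨ha, -⟩ := abs_le.mp ha
  obtain ⟨hb', hb⟩ := abs_le.mp hb
  have hb0 : 0 < b := by nlinarith [mul_pos hs (sub_pos.mpr ht)]
  rw [div_le_div_iff₀ (by linarith) hb0]
  nlinarith

theorem div_le_ciInf_div_ciSup {ι : Type*} [Finite ι] [Nonempty ι] {f : ι → ℕ} {x c t : ℝ}
    (hx : 0 < x) (hc : 0 < c) (ht : 1 < t) (hf : ∀ i, |f i * x - c| ≤ c / t) :
    (t - 1) / (t + 1) ≤ ((⨅ i, f i : ℕ) : ℝ) / ((⨆ i, f i : ℕ) : ℝ) := by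
  obtain ⟨i, hi⟩ := exists_eq_ciInf_of_finite (f := f)
  obtain ⟨j, hj⟩ := exists_eq_ciSup_of_finite (f := f)
  rw [← hi, ← hj, ← mul_div_mul_right (f i : ℝ) _ hx.ne']
  exact div_le_div_of_abs_sub_le hc ht (hf i) (hf j)

theorem stmt_11 :
    ∀ ε : ℝ, 0 < ε → ∃ N₀ : ℕ,
      ∀ (G : Type) [AddCommGroup G] [Fintype G] [DecidableEq G],
        N₀ ≤ Fintype.card G →
        ∀ k : ℕ, 4 ≤ k → k ≤ Fintype.card G / 2 + 1 →
          ((⨅ b : G, ((Finset.univ.powersetCard k).filter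
              (fun S : Finset G => S.sum id = b)).card : ℕ) : ℝ) /
            ((⨆ b : G, ((Finset.univ.powersetCard k).filter
              (fun S : Finset G => S.sum id = b)).card : ℕ) : ℝ) > 1 - ε := by
  intro ε hε
  set T := ⌈2 / ε⌉₊ + 2
  refine ⟨8 * T + 10, fun G _ _ _ hn k hk4 hk => ?_⟩
  set n := Fintype.card G
  have hn0 : (0 : ℝ) < n := by norm_cast; omega
  have hC : (0 : ℝ) < n.choose k := by exact_mod_cast Nat.choose_pos (by omega)
  have hT : (2 : ℝ) ≤ T := by simp [T]
  have hdev (b : G) : |(subsetSumCount G k b : ℝ) * n - n.choose k| ≤ n.choose k / T := by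
    refine (abs_subsetSumCount_mul_card_sub_choose_le (B := n.choose k / (T * n))
      (fun ψ hψ => ?_) b).trans ?_
    · rw [le_div_iff₀ (by positivity), mul_comm]
      exact ψ.mul_norm_esymm_le_choose hψ hn hk4 hk
    · calc ((n - 1 : ℕ) : ℝ) * (n.choose k / (T * n)) ≤ n * (n.choose k / (T * n)) := by
            gcongr; exact_mod_cast n.sub_le 1
        _ = n.choose k / T := by field_simp
  have hTε : 2 < ε * (T + 1) := by
    have h := (div_le_iff₀' hε).mp (Nat.le_ceil (2 / ε))
    simp only [T, Nat.cast_add, Nat.cast_ofNat]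
    nlinarith
  have : Nonempty G := ⟨0⟩
  calc 1 - ε < (T - 1) / (T + 1) := by rw [lt_div_iff₀ (by positivity)]; linarith
    _ ≤ _ := div_le_ciInf_div_ciSup hn0 hC (by linarith) hdev
end

section
/- For a finite abelian group G of order n and any k with gcd(n, k) = 1, the number N(k, b) of k-subsets of G summing to b equals C(n, k)/n for every b ∈ G (in particular it is independent of b). -/
/-! Translating a `k`-subset by `g` shifts its sum by `k • g`. When `k` is coprime to `|G|`,
multiplication by `k` is a bijection of `G`, so translations permute the `k`-subsets transitively
across the possible sums: all `|G|` fibres of the sum map have the same size, which is therefore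
`C(|G|, k) / |G|`. -/

open Finset

lemma sum_map_addRight {G : Type*} [AddCommGroup G] (S : Finset G) (g : G) :
    (S.map (Equiv.addRight g).toEmbedding).sum id = S.sum id + #S • g := by
  simp [sum_add_distrib]

variable {G : Type*} [AddCommGroup G] [Fintype G] [DecidableEq G]

lemma card_filter_sum_eq_add_nsmul (k : ℕ) (b g : G) :
    #{S ∈ powersetCard k (univ : Finset G) | S.sum id = b + k • g} =
      #{S ∈ powersetCard k (univ : Finset G) | S.sum id = b} := by
  symm
  refine card_equiv (Equiv.addRight g).finsetCongr fun S => ?_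
  simp only [mem_filter, mem_powersetCard, subset_univ, true_and, Equiv.finsetCongr_apply,
    card_map, sum_map_addRight]
  constructor
  · rintro ⟨rfl, rfl⟩
    exact ⟨rfl, rfl⟩
  · rintro ⟨rfl, h⟩
    exact ⟨rfl, add_right_cancel h⟩

lemma card_filter_sum_eq_of_coprime {k : ℕ} (hk : (Nat.card G).Coprime k) (b c : G) :
    #{S ∈ powersetCard k (univ : Finset G) | S.sum id = c} =
      #{S ∈ powersetCard k (univ : Finset G) | S.sum id = b} := by
  obtain ⟨g, hg⟩ := hk.nsmul_right_bijective.surjective (c - b)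
  rw [← card_filter_sum_eq_add_nsmul k b g]
  simp only [hg, add_sub_cancel]

lemma card_mul_card_filter_sum_eq_choose {k : ℕ} (hk : (Nat.card G).Coprime k) (b : G) :
    Fintype.card G * #{S ∈ powersetCard k (univ : Finset G) | S.sum id = b} =
      (Fintype.card G).choose k := by
  calc Fintype.card G * #{S ∈ powersetCard k (univ : Finset G) | S.sum id = b}
      = ∑ c : G, #{S ∈ powersetCard k (univ : Finset G) | S.sum id = c} := by
        rw [sum_congr rfl fun c _ => card_filter_sum_eq_of_coprime hk b c, sum_const, card_univ,
          smul_eq_mul]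
    _ = #(powersetCard k (univ : Finset G)) :=
        (card_eq_sum_card_fiberwise fun _ _ => mem_univ _).symm
    _ = (Fintype.card G).choose k := by rw [card_powersetCard, card_univ]

theorem stmt_13 (G : Type) [AddCommGroup G] [Fintype G] [DecidableEq G]
    (n k : ℕ) (hn : n = Fintype.card G) (hgcd : Nat.gcd n k = 1) (b : G) :
    ((((Finset.univ.powersetCard k).filter
        (fun S : Finset G => S.sum id = b)).card : ℝ)) =
      (n.choose k : ℝ) / (n : ℝ) := by
  subst hn
  have hk : (Nat.card G).Coprime k := by rwa [Nat.card_eq_fintype_card]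
  have hG : (Fintype.card G : ℝ) ≠ 0 := Nat.cast_ne_zero.mpr Fintype.card_ne_zero
  rw [eq_div_iff hG, mul_comm]
  exact_mod_cast card_mul_card_filter_sum_eq_choose hk b
end

section
/- For all even integers n ≥ 4 and even k with 4 ≤ k ≤ n, the inequality C(n/2, k/2)/C(n, k) ≤ ∏_{i=0}^{k/2−1} (k − 2i)/(n − 2i) holds, and each factor (k−2i)/(n−2i) ≤ k/n, giving C(n/2, k/2)/C(n, k) ≤ (k/n)^{k/2}. -/
/-!
Write `n = 2m`, `k = 2j`. Cancelling the factors `2`, the product is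
`j! / (m (m-1) ⋯ (m-j+1)) = 1 / C(m, j)`, while Vandermonde's identity gives
`C(2m, 2j) ≥ C(m, j)²`; hence `C(m, j) / C(2m, 2j) ≤ 1 / C(m, j)`. Each factor satisfies
`(k - 2i)/(n - 2i) ≤ k/n` because `k ≤ n`, and is nonnegative, so the product is at most `(k/n)^j`.
-/

open Finset

theorem prod_range_natCast_sub_eq_descFactorial {R : Type*} [CommRing R] (n k : ℕ) :
    ∏ i ∈ range k, ((n : R) - i) = n.descFactorial k := by
  rw [← descPochhammer_eval_eq_prod_range, descPochhammer_eval_eq_descFactorial]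

/-- For `j > m` both sides vanish: the factor `i = m` has denominator `0`. -/
theorem prod_range_sub_div_sub_eq_inv_choose {K : Type*} [Field K] [CharZero K] (m j : ℕ) :
    ∏ i ∈ range j, ((j : K) - i) / ((m : K) - i) = (m.choose j : K)⁻¹ := by
  rw [prod_div_distrib, prod_range_natCast_sub_eq_descFactorial,
    prod_range_natCast_sub_eq_descFactorial, Nat.descFactorial_self,
    Nat.descFactorial_eq_factorial_mul_choose, Nat.cast_mul]
  exact div_mul_cancel_left₀ (Nat.cast_ne_zero.2 j.factorial_ne_zero) _

theorem prod_range_add_self_sub_div_eq_inv_choose {K : Type*} [Field K] [CharZero K] (m j : ℕ) :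
    ∏ i ∈ range j, ((↑(j + j) : K) - 2 * i) / (↑(m + m) - 2 * i) = (m.choose j : K)⁻¹ := by
  rw [← prod_range_sub_div_sub_eq_inv_choose]
  refine prod_congr rfl fun i _ => ?_
  have hdouble (a : ℕ) : (↑(a + a) : K) - 2 * i = 2 * (a - i) := by push_cast; ring
  rw [hdouble, hdouble, mul_div_mul_left _ _ (two_ne_zero' K)]

theorem Nat.choose_mul_choose_le_add_choose_s14 (a b i j : ℕ) :
    a.choose i * b.choose j ≤ (a + b).choose (i + j) := by
  rw [Nat.add_choose_eq]
  exact single_le_sum (f := fun p : ℕ × ℕ => a.choose p.1 * b.choose p.2)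
    (fun _ _ => Nat.zero_le _) (a := (i, j)) (mem_antidiagonal.2 rfl)

theorem div_le_inv_of_mul_self_le {K : Type*} [Field K] [LinearOrder K] [IsStrictOrderedRing K]
    {a b : K} (ha : 0 ≤ a) (hab : a * a ≤ b) : a / b ≤ a⁻¹ := by
  rcases ha.eq_or_lt with rfl | ha
  · simp
  calc a / b ≤ a / (a * a) := div_le_div_of_nonneg_left ha.le (by positivity) hab
    _ = a⁻¹ := by field_simp

theorem sub_div_sub_le_div {K : Type*} [Field K] [LinearOrder K] [IsStrictOrderedRing K]
    {a b c : K} (hc : 0 ≤ c) (hcb : c < b) (hab : a ≤ b) : (a - c) / (b - c) ≤ a / b := by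
  rw [div_le_div_iff₀ (sub_pos.2 hcb) (hc.trans_lt hcb)]
  nlinarith

theorem stmt_14_general (n k : ℕ) (hn : Even n) (hk : Even k) (hkn : k ≤ n) :
    ((n / 2).choose (k / 2) : ℝ) / (n.choose k : ℝ) ≤
        ∏ i ∈ Finset.range (k / 2), ((k : ℝ) - 2 * i) / ((n : ℝ) - 2 * i) ∧
    (∀ i ∈ Finset.range (k / 2),
        ((k : ℝ) - 2 * i) / ((n : ℝ) - 2 * i) ≤ (k : ℝ) / (n : ℝ)) ∧
    ((n / 2).choose (k / 2) : ℝ) / (n.choose k : ℝ) ≤ ((k : ℝ) / n) ^ (k / 2) := by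
  obtain ⟨m, rfl⟩ := hn
  obtain ⟨j, rfl⟩ := hk
  have hm : (m + m) / 2 = m := by omega
  have hj : (j + j) / 2 = j := by omega
  have hkn : (↑(j + j) : ℝ) ≤ ↑(m + m) := by exact_mod_cast hkn
  have hfactor : ∀ i ∈ range j, (0 : ℝ) ≤ 2 * i ∧ (2 * i : ℝ) < ↑(j + j) := fun i hi => by
    have : 2 * i < j + j := by rw [mem_range] at hi; omega
    exact ⟨by positivity, by exact_mod_cast this⟩
  have hprod : ((m.choose j : ℝ) / ((m + m).choose (j + j) : ℝ)) ≤
      ∏ i ∈ range j, ((↑(j + j) : ℝ) - 2 * i) / (↑(m + m) - 2 * i) := by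
    have hsq : (m.choose j : ℝ) * m.choose j ≤ ((m + m).choose (j + j) : ℝ) := by
      exact_mod_cast Nat.choose_mul_choose_le_add_choose_s14 m m j j
    rw [prod_range_add_self_sub_div_eq_inv_choose]
    exact div_le_inv_of_mul_self_le (by positivity) hsq
  have hle : ∀ i ∈ range j, ((↑(j + j) : ℝ) - 2 * i) / (↑(m + m) - 2 * i) ≤ ↑(j + j) / ↑(m + m) :=
    fun i hi => sub_div_sub_le_div (hfactor i hi).1 ((hfactor i hi).2.trans_le hkn) hkn
  rw [hm, hj]
  refine ⟨hprod, hle, hprod.trans ?_⟩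
  calc _ ≤ ∏ _i ∈ range j, (↑(j + j) : ℝ) / ↑(m + m) := prod_le_prod (fun i hi => by
          obtain ⟨h0, hlt⟩ := hfactor i hi
          exact div_nonneg (by linarith) (by linarith)) hle
    _ = _ := by rw [prod_const, card_range]

theorem stmt_14 (n k : ℕ) (hn : Even n) (hn4 : 4 ≤ n) (hk : Even k)
    (hk4 : 4 ≤ k) (hkn : k ≤ n) :
    ((n / 2).choose (k / 2) : ℝ) / (n.choose k : ℝ) ≤
        ∏ i ∈ Finset.range (k / 2), ((k : ℝ) - 2 * i) / ((n : ℝ) - 2 * i) ∧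
    (∀ i ∈ Finset.range (k / 2),
        ((k : ℝ) - 2 * i) / ((n : ℝ) - 2 * i) ≤ (k : ℝ) / (n : ℝ)) ∧
    ((n / 2).choose (k / 2) : ℝ) / (n.choose k : ℝ) ≤ ((k : ℝ) / n) ^ (k / 2) :=
  stmt_14_general n k hn hk hkn
end

section
/- Let G be a finite abelian group of order n, k an integer with 4 ≤ k ≤ ⌊n/2⌋ + 1, and suppose n ≥ N₀ is large enough that k·n·C(⌊n/2⌋, ⌊k/2⌋) < C(n,k)/(2n) holds for all such k. Then N(k, b) > 0 for every b ∈ G, i.e., every group element is the sum of some k-subset. -/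
/-! If no `k`-subset of `G` sums to `b`, then every `k`-subset `S` is invariant under translation
by `d = b - ∑ S ≠ 0`: otherwise exchanging some `x ∈ S` with `x + d ∉ S` yields a `k`-subset
with sum `b`. A `d`-invariant set is a union of cosets of `⟨d⟩`, so it is determined by its image
in `G ⧸ ⟨d⟩`, which consists of at most `k / 2` of the at most `n / 2` cosets. Summing over the
`n - 1` possible `d` gives `C(n, k) ≤ k n C(n / 2, k / 2)`, contradicting the hypothesis. -/

open Finset QuotientAddGroup AddSubgroup

theorem Nat.choose_le_choose_right_of_two_mul_le_succ {N i j : ℕ} (hij : i ≤ j)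
    (hj : 2 * j ≤ N + 1) :
    N.choose i ≤ N.choose j := by
  induction j, hij using Nat.le_induction with
  | base => rfl
  | succ j hij ih =>
    rcases Nat.lt_or_ge (2 * j + 2) (N + 1) with hlt | hge
    · exact (ih (by omega)).trans (Nat.choose_le_succ_of_lt_half_left (by omega))
    · -- here `N = 2 * j + 1`, so `j + 1` and `j` are symmetric
      rw [← Nat.choose_symm (show j + 1 ≤ N by omega), show N - (j + 1) = j by omega]
      exact ih (by omega)

section Translation

variable {G : Type*} [AddCommGroup G] {S S' : Finset G} {d : G}

theorem add_nsmul_mem_of_forall_add_mem (hS : ∀ x ∈ S, x + d ∈ S) (t : ℕ) {x : G}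
    (hx : x ∈ S) : x + t • d ∈ S := by
  induction t with
  | zero => simpa using hx
  | succ t ih => simpa [succ_nsmul, ← add_assoc] using hS _ ih

theorem mem_of_mk_eq_of_forall_add_mem [Finite G] (hS : ∀ x ∈ S, x + d ∈ S) {x y : G}
    (hx : x ∈ S) (hxy : (x : G ⧸ zmultiples d) = y) : y ∈ S := by
  rw [QuotientAddGroup.eq, ← mem_multiples_iff_mem_zmultiples] at hxy
  obtain ⟨t, ht⟩ := hxy
  simpa [ht] using add_nsmul_mem_of_forall_add_mem hS t hx

variable [DecidableEq (G ⧸ zmultiples d)]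

theorem eq_of_image_mk_eq_of_forall_add_mem [Finite G] (hS : ∀ x ∈ S, x + d ∈ S)
    (hS' : ∀ x ∈ S', x + d ∈ S')
    (h : S.image (mk : G → G ⧸ zmultiples d) = S'.image mk) : S = S' := by
  have key : ∀ {T T' : Finset G}, (∀ x ∈ T', x + d ∈ T') →
      T.image (mk : G → G ⧸ zmultiples d) = T'.image mk → T ⊆ T' := by
    intro T T' hT' h x hx
    obtain ⟨y, hy, hyx⟩ := mem_image.mp (h ▸ mem_image_of_mem mk hx)
    exact mem_of_mk_eq_of_forall_add_mem hT' hy hyx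
  exact (key hS' h).antisymm (key hS h.symm)

theorem two_mul_card_image_mk_le (hd : d ≠ 0) (hS : ∀ x ∈ S, x + d ∈ S) :
    2 * #(S.image (mk : G → G ⧸ zmultiples d)) ≤ #S := by
  refine mul_card_image_le_card S 2 fun q hq ↦ ?_
  obtain ⟨x, hx, rfl⟩ := mem_image.mp hq
  refine one_lt_card.mpr ⟨x, by simp [hx], x + d, ?_, by simpa using hd⟩
  simp [hS x hx, QuotientAddGroup.eq]

end Translation

theorem two_mul_card_quotient_zmultiples_le {G : Type*} [AddGroup G] [Finite G] {d : G}
    (hd : d ≠ 0) : 2 * Nat.card (G ⧸ zmultiples d) ≤ Nat.card G := by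
  have : 2 ≤ addOrderOf d := by
    have := addOrderOf_pos d
    have : addOrderOf d ≠ 1 := by simpa using hd
    omega
  rw [card_eq_card_quotient_mul_card_addSubgroup (zmultiples d), Nat.card_zmultiples, mul_comm]
  exact Nat.mul_le_mul_left _ this

theorem card_filter_forall_add_mem_le {G : Type*} [AddCommGroup G] [Fintype G] [DecidableEq G]
    {d : G} (hd : d ≠ 0) {k : ℕ} (hk : k ≤ Fintype.card G / 2 + 1) :
    #{S ∈ powersetCard k (univ : Finset G) | ∀ x ∈ S, x + d ∈ S} ≤
      (k / 2 + 1) * (Fintype.card G / 2).choose (k / 2) := by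
  classical
  let _ : Fintype (G ⧸ zmultiples d) := Fintype.ofFinite _
  have hQ : Fintype.card (G ⧸ zmultiples d) ≤ Fintype.card G / 2 := by
    have := two_mul_card_quotient_zmultiples_le hd
    simp only [Nat.card_eq_fintype_card] at this
    omega
  set A : Finset (Finset G) := {S ∈ powersetCard k univ | ∀ x ∈ S, x + d ∈ S}
  set B : Finset (Finset (G ⧸ zmultiples d)) :=
    (range (k / 2 + 1)).biUnion fun j ↦ powersetCard j univ
  have hmaps : Set.MapsTo (fun S : Finset G ↦ S.image (mk : G → G ⧸ zmultiples d)) A B := by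
    intro S hS
    simp only [A, coe_filter, mem_powersetCard_univ, Set.mem_ofPred_eq] at hS
    have := two_mul_card_image_mk_le hd hS.2
    simp only [B, coe_biUnion, coe_range, Set.mem_iUnion, Set.mem_Iio, mem_coe,
      mem_powersetCard_univ, exists_prop]
    exact ⟨_, by omega, rfl⟩
  have hinj : Set.InjOn (fun S : Finset G ↦ S.image (mk : G → G ⧸ zmultiples d)) A := by
    intro S hS S' hS' h
    simp only [A, coe_filter, Set.mem_ofPred_eq] at hS hS'
    exact eq_of_image_mk_eq_of_forall_add_mem hS.2 hS'.2 h
  calc #A ≤ #B := card_le_card_of_injOn _ hmaps hinj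
    _ ≤ ∑ j ∈ range (k / 2 + 1), #(powersetCard j (univ : Finset (G ⧸ zmultiples d))) :=
        card_biUnion_le
    _ ≤ ∑ _j ∈ range (k / 2 + 1), (Fintype.card G / 2).choose (k / 2) := by
        refine sum_le_sum fun j hj ↦ ?_
        rw [card_powersetCard, card_univ]
        refine (Nat.choose_le_choose j hQ).trans ?_
        exact Nat.choose_le_choose_right_of_two_mul_le_succ
          (by simpa [Nat.lt_succ_iff] using hj) (by omega)
    _ = (k / 2 + 1) * (Fintype.card G / 2).choose (k / 2) := by simp

theorem forall_add_sub_sum_mem_of_forall_sum_ne {G : Type*} [AddCommGroup G] [DecidableEq G]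
    {S : Finset G} {b : G} (h : ∀ T : Finset G, #T = #S → T.sum id ≠ b) :
    ∀ x ∈ S, x + (b - S.sum id) ∈ S := by
  intro x hx
  by_contra hy
  have hy' : x + (b - S.sum id) ∉ S.erase x := fun h ↦ hy (mem_of_mem_erase h)
  refine h (insert (x + (b - S.sum id)) (S.erase x)) ?_ ?_
  · rw [card_insert_of_notMem hy', card_erase_add_one hx]
  · rw [sum_insert hy', ← sum_erase_add S id hx]
    simp only [id_eq]
    abel

theorem choose_le_of_forall_sum_ne {G : Type*} [AddCommGroup G] [Fintype G] [DecidableEq G]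
    {k : ℕ} {b : G} (hk : k ≤ Fintype.card G / 2 + 1)
    (h : ∀ T : Finset G, #T = k → T.sum id ≠ b) :
    (Fintype.card G).choose k ≤
      (Fintype.card G - 1) * ((k / 2 + 1) * (Fintype.card G / 2).choose (k / 2)) := by
  have hcover : powersetCard k (univ : Finset G) ⊆
      (univ.erase 0).biUnion fun d ↦ {S ∈ powersetCard k univ | ∀ x ∈ S, x + d ∈ S} := by
    intro S hS
    have hSk := mem_powersetCard_univ.mp hS
    refine mem_biUnion.mpr
      ⟨b - S.sum id, mem_erase.mpr ⟨?_, mem_univ _⟩, mem_filter.mpr ⟨hS, ?_⟩⟩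
    · exact sub_ne_zero.mpr (h S hSk).symm
    · exact forall_add_sub_sum_mem_of_forall_sum_ne (hSk ▸ h)
  calc (Fintype.card G).choose k = #(powersetCard k (univ : Finset G)) := by simp
    _ ≤ ∑ d ∈ univ.erase 0, #{S ∈ powersetCard k univ | ∀ x ∈ S, x + d ∈ S} :=
        (card_le_card hcover).trans card_biUnion_le
    _ ≤ ∑ _d ∈ univ.erase (0 : G), (k / 2 + 1) * (Fintype.card G / 2).choose (k / 2) :=
        sum_le_sum fun _d hd ↦ card_filter_forall_add_mem_le (ne_of_mem_erase hd) hk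
    _ = _ := by simp [card_erase_of_mem]

theorem stmt_17 (G : Type) [AddCommGroup G] [Fintype G] [DecidableEq G]
    (n k : ℕ) (hn : n = Fintype.card G) (hk4 : 4 ≤ k) (hk : k ≤ n / 2 + 1)
    (hbig : (k : ℝ) * (n : ℝ) * ((n / 2).choose (k / 2) : ℝ) <
      (n.choose k : ℝ) / (2 * (n : ℝ))) :
    ∀ b : G, 0 < ((Finset.univ.powersetCard k).filter
        (fun S : Finset G => S.sum id = b)).card := by
  intro b
  by_contra hb
  have h : ∀ T : Finset G, #T = k → T.sum id ≠ b := fun T hT hTb ↦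
    hb (card_pos.mpr ⟨T, mem_filter.mpr ⟨mem_powersetCard_univ.mpr hT, hTb⟩⟩)
  subst hn
  have hcount := choose_le_of_forall_sum_ne hk h
  set n := Fintype.card G
  have hn : 1 ≤ n := Fintype.card_pos
  have hbound : (n - 1) * ((k / 2 + 1) * (n / 2).choose (k / 2)) ≤
      k * n * (n / 2).choose (k / 2) := by
    rw [← mul_assoc, mul_comm k n]
    exact Nat.mul_le_mul_right _ (Nat.mul_le_mul (Nat.sub_le n 1) (by omega))
  have hreal : (n.choose k : ℝ) ≤ k * n * (n / 2).choose (k / 2) := by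
    exact_mod_cast hcount.trans hbound
  have : (n.choose k : ℝ) / (2 * n) ≤ n.choose k :=
    div_le_self (by positivity) (by norm_cast; omega)
  linarith
end
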